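/- arXiv:2207.01335 — 8 statements merged into one kernel-verified Lean document; each statement's English description precedes it below -/
import Mathlib

section
/- Let G be a finite group and let k be a (not necessarily finite) field whose multiplicative group k* has order at least 2|G|. Then there exists a function f : G → k such that for every field extension F of k, the Cayley evolution F-algebra Cay(f_F) — where f_F : G → F is the composition of f with the inclusion k → F — is simple, and the automorphism group Aut(Cay(f_F)) is isomorphic to G. -/
/-!
When the structure matrix `M = (f (g⁻¹ * h))` is invertible, `x · y = M (x * y)` vanishes exactly
when `x` and `y` have disjoint supports. An automorphism therefore preserves disjointness of
supports and sends each basis vector `δ_g` to a multiple `μ g • δ_{t g}`. If moreover `f` has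
nonzero, pairwise distinct values, comparing `δ_g · δ_g` with its image forces `μ = 1` and
`t h = t 1 * h`, so the automorphisms are exactly the left translations; invertibility of `M`
with `f ≠ 0` also gives simplicity. These three conditions survive every field extension.

To find such an `f`, embed `G` into `kˣ` by `ι` and put `f = ι` away from `1` and `f 1 = u`.
Then `det M` is a monic polynomial of degree `|G|` in `u`, so it remains to avoid its roots and
the `|G| - 1` values `ι g`, `g ≠ 1`: fewer than `2|G| ≤ |kˣ|` units.
-/

open scoped BigOperators

variable {k : Type*} [Field k] {G : Type*} [Group G] [Fintype G] [DecidableEq G]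

/-- The Cayley evolution product on the group algebra `k[G]` (realized as `G → k`):
it is the `k`-bilinear product with `δ_g · δ_g = ∑ h, f (g⁻¹ * h) • δ_h` and
`δ_g · δ_{g'} = 0` for `g ≠ g'`. -/
def cayMul (f : G → k) (x y : G → k) : G → k :=
  fun h => ∑ g : G, x g * y g * f (g⁻¹ * h)

/-- The automorphism group of the Cayley evolution algebra `Cay(f)`: the `k`-linear
bijections of `k[G]` preserving the Cayley evolution product. -/
def cayAut (f : G → k) : Subgroup ((G → k) ≃ₗ[k] (G → k)) where
  carrier := {φ | ∀ x y, φ (cayMul f x y) = cayMul f (φ x) (φ y)}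
  one_mem' := fun _ _ => rfl
  mul_mem' := by
    intro a b ha hb x y
    replace ha : ∀ x y, a (cayMul f x y) = cayMul f (a x) (a y) := ha
    replace hb : ∀ x y, b (cayMul f x y) = cayMul f (b x) (b y) := hb
    show a (b (cayMul f x y)) = cayMul f (a (b x)) (a (b y))
    rw [hb, ha]
  inv_mem' := by
    intro a ha x y
    replace ha : ∀ x y, a (cayMul f x y) = cayMul f (a x) (a y) := ha
    show a.symm (cayMul f x y) = cayMul f (a.symm x) (a.symm y)
    apply a.injective
    rw [ha, a.apply_symm_apply, a.apply_symm_apply, a.apply_symm_apply]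

/-- `Cay(f)` is simple: the product is not identically zero and the only ideals
(`k`-subspaces `I` with `k[G] · I ⊆ I`) are `0` and `k[G]`. -/
def CaySimple (f : G → k) : Prop :=
  (∃ x y : G → k, cayMul f x y ≠ 0) ∧
  ∀ I : Submodule k (G → k), (∀ x y : G → k, y ∈ I → cayMul f x y ∈ I) → I = ⊥ ∨ I = ⊤

/-- The structure matrix of `Cay(f)`: its `(h, g)` entry is `f (g⁻¹ * h)`. -/
def structMatrix (f : G → k) : Matrix G G k := Matrix.of fun h g => f (g⁻¹ * h)

lemma Pi.eq_single_of_forall_exists_mul_sub_smul_eq_zero {α R : Type*} [DecidableEq α] [Ring R]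
    [NoZeroDivisors R] {v : α → R} (hv : v ≠ 0) (h : ∀ w, ∃ c : R, v * (w - c • v) = 0) :
    ∃ a, v = Pi.single a (v a) := by
  obtain ⟨a, ha⟩ := Function.ne_iff.mp hv
  obtain ⟨c, hc⟩ := h (Pi.single a 1)
  have hc0 : c ≠ 0 := by
    rintro rfl
    exact ha (by simpa using congrFun hc a)
  refine ⟨a, funext fun b => ?_⟩
  rcases eq_or_ne b a with rfl | hb
  · simp
  · simpa [Pi.single_eq_of_ne hb, hc0] using congrFun hc b

lemma LinearMap.apply_eq_mul_of_apply_single {α R : Type*} [Fintype α] [DecidableEq α]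
    [CommSemiring R] (L : (α → R) →ₗ[R] (α → R)) {t : α → α} (ht : Function.Injective t)
    {μ : α → R} (hL : ∀ a, L (Pi.single a 1) = Pi.single (t a) (μ a)) (x : α → R) (a : α) :
    L x (t a) = μ a * x a := by
  have hL' : ∀ b, L (Pi.single b (x b)) = Pi.single (t b) (x b * μ b) := fun b => by
    rw [← mul_one (x b), ← smul_eq_mul, Pi.single_smul', map_smul, hL, ← Pi.single_smul']
    simp
  conv_lhs => rw [← Finset.univ_sum_single x]
  rw [map_sum, Finset.sum_apply, Fintype.sum_eq_single a fun b hb => by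
    rw [hL', Pi.single_eq_of_ne' (ht.ne hb)], hL', Pi.single_eq_same, mul_comm]

lemma Finset.exists_units_notMem_of_card_lt {M : Type*} [Monoid M] (s : Finset M)
    (hs : (s.card : Cardinal) < Cardinal.mk Mˣ) : ∃ u : Mˣ, (u : M) ∉ s := by
  by_contra! h
  refine hs.not_ge ?_
  rw [← Cardinal.mk_coe_finset]
  exact Cardinal.mk_le_of_injective (f := fun u : Mˣ => (⟨u, h u⟩ : s))
    fun _ _ huv => Units.ext (congrArg Subtype.val huv)

lemma Function.Injective.update {α β : Type*} [DecidableEq α] {f : α → β}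
    (hf : Function.Injective f) (a : α) {b : β} (hb : ∀ x ≠ a, f x ≠ b) :
    Function.Injective (Function.update f a b) := by
  intro x y hxy
  rcases eq_or_ne x a with hx | hx <;> rcases eq_or_ne y a with hy | hy
  · exact hx.trans hy.symm
  · rw [hx, Function.update_self, Function.update_of_ne hy] at hxy
    exact absurd hxy.symm (hb y hy)
  · rw [hy, Function.update_of_ne hx, Function.update_self] at hxy
    exact absurd hxy (hb x hx)
  · rwa [Function.update_of_ne hx, Function.update_of_ne hy, hf.eq_iff] at hxy

omit [DecidableEq G] in
lemma cayMul_eq_mulVec (f : G → k) (x y : G → k) :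
    cayMul f x y = (structMatrix f).mulVec (x * y) := by
  funext h
  simp only [cayMul, structMatrix, Matrix.mulVec, dotProduct, Matrix.of_apply, Pi.mul_apply,
    mul_comm (f _)]

lemma cayMul_single_left (f : G → k) (a : G) (b : k) (y : G → k) :
    cayMul f (Pi.single a b) y = fun h => b * y a * f (a⁻¹ * h) := by
  funext h
  rw [cayMul, Fintype.sum_eq_single a fun g hg => by simp [Pi.single_eq_of_ne hg],
    Pi.single_eq_same]

lemma cayMul_eq_zero_iff {f : G → k} (hM : IsUnit (structMatrix f)) {x y : G → k} :
    cayMul f x y = 0 ↔ x * y = 0 := by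
  rw [cayMul_eq_mulVec]
  exact (Matrix.mulVec_injective_of_isUnit hM).eq_iff' (Matrix.mulVec_zero _)

lemma caySimple_of_isUnit {f : G → k} (hf : ∀ g, f g ≠ 0) (hM : IsUnit (structMatrix f)) :
    CaySimple f := by
  refine ⟨⟨1, 1, (cayMul_eq_zero_iff hM).not.mpr (by simp)⟩, fun I hI => ?_⟩
  -- multiplying by a basis vector `δ_a` extracts the translate `h ↦ f (a⁻¹ * h)` of `f`
  have translate_mem : ∀ y ∈ I, ∀ a, y a ≠ 0 → (fun h => f (a⁻¹ * h)) ∈ I := by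
    intro y hy a hya
    simpa [cayMul_single_left, inv_mul_cancel₀ hya] using hI (Pi.single a (y a)⁻¹) y hy
  refine or_iff_not_imp_left.mpr fun hI0 => Submodule.eq_top_iff'.mpr fun x => ?_
  obtain ⟨y, hy, hy0⟩ := Submodule.exists_mem_ne_zero_of_ne_bot hI0
  obtain ⟨a, ha⟩ := Function.ne_iff.mp hy0
  have hfI : f ∈ I := by
    simpa using translate_mem _ (translate_mem y hy a ha) 1 (by simpa using hf a⁻¹)
  obtain ⟨v, rfl⟩ := Matrix.mulVec_surjective_iff_isUnit.mpr hM x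
  have hv : v / f * f = v := funext fun g => div_mul_cancel₀ (v g) (hf g)
  simpa [cayMul_eq_mulVec, hv] using hI (v / f) f hfI

variable (k) in
omit [Fintype G] [DecidableEq G] in
def leftTranslation : G →* ((G → k) ≃ₗ[k] (G → k)) where
  toFun t := LinearEquiv.funCongrLeft k k (Equiv.mulLeft t⁻¹)
  map_one' := by ext; simp
  map_mul' s t := by ext; simp [mul_assoc]

omit [Fintype G] [DecidableEq G] in
lemma leftTranslation_apply (t : G) (x : G → k) (h : G) :
    leftTranslation k t x h = x (t⁻¹ * h) :=
  rfl

omit [Fintype G] in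
lemma leftTranslation_single (t a : G) (b : k) :
    leftTranslation k t (Pi.single a b) = Pi.single (t * a) b := by
  funext h
  simp [leftTranslation_apply, Pi.single_apply, inv_mul_eq_iff_eq_mul]

omit [Fintype G] in
lemma leftTranslation_injective : Function.Injective (leftTranslation k : G → _) := by
  intro s t hst
  have := congrArg (fun φ : (G → k) ≃ₗ[k] (G → k) => φ (Pi.single 1 1) s) hst
  by_contra hne
  simp [leftTranslation_single, Pi.single_eq_of_ne hne] at this

omit [DecidableEq G] in
lemma leftTranslation_mem_cayAut (f : G → k) (t : G) : leftTranslation k t ∈ cayAut f := by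
  intro x y
  funext h
  simp only [leftTranslation_apply, cayMul]
  exact Fintype.sum_equiv (Equiv.mulLeft t) _ _ fun g => by simp [mul_assoc]

section Automorphisms

variable {f : G → k} {φ : (G → k) ≃ₗ[k] (G → k)}

lemma mul_eq_zero_iff_of_mem_cayAut (hM : IsUnit (structMatrix f)) (hφ : φ ∈ cayAut f)
    (x y : G → k) : φ x * φ y = 0 ↔ x * y = 0 := by
  rw [← cayMul_eq_zero_iff hM, ← cayMul_eq_zero_iff hM, ← hφ x y, φ.map_eq_zero_iff]

/-- The vectors `δ_a` are, up to scalars, the nonzero `v` with `k v + Ann(v) = k[G]`, and this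
property is invariant under automorphisms. -/
lemma exists_apply_single_eq_of_mem_cayAut (hM : IsUnit (structMatrix f)) (hφ : φ ∈ cayAut f)
    (g : G) : ∃ a b, b ≠ 0 ∧ φ (Pi.single g 1) = Pi.single a b := by
  have hv : φ (Pi.single g 1) ≠ 0 := by simp
  obtain ⟨a, ha⟩ := Pi.eq_single_of_forall_exists_mul_sub_smul_eq_zero hv fun w => by
    obtain ⟨u, rfl⟩ := φ.surjective w
    refine ⟨u g, ?_⟩
    rw [← map_smul, ← map_sub, mul_eq_zero_iff_of_mem_cayAut hM hφ]
    funext h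
    rcases eq_or_ne h g with rfl | hh <;> simp [*]
  exact ⟨a, _, fun h0 => hv (by rw [ha, h0, Pi.single_zero]), ha⟩

lemma eq_leftTranslation_of_mem_cayAut (hf : ∀ g, f g ≠ 0) (hinj : Function.Injective f)
    (hM : IsUnit (structMatrix f)) (hφ : φ ∈ cayAut f) : ∃ s, φ = leftTranslation k s := by
  choose t μ hμ ht using exists_apply_single_eq_of_mem_cayAut hM hφ
  have t_inj : Function.Injective t := by
    intro g g' hgg'
    by_contra hne
    have h0 : (Pi.single g 1 : G → k) * Pi.single g' 1 = 0 := by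
      simp [← Pi.single_mul_left, Pi.single_eq_of_ne hne]
    rw [← mul_eq_zero_iff_of_mem_cayAut hM hφ, ht, ht, ← hgg'] at h0
    simp [← Pi.single_mul_left, hμ] at h0
  have happly : ∀ x a, φ x (t a) = μ a * x a :=
    φ.toLinearMap.apply_eq_mul_of_apply_single t_inj ht
  -- compare the coefficients of `δ_{t h}` in `φ (δ_g · δ_g) = φ δ_g · φ δ_g`
  have hfun : ∀ g h, μ h * f (g⁻¹ * h) = μ g * μ g * f ((t g)⁻¹ * t h) := fun g h => by
    simpa [happly, ht, cayMul_single_left] using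
      congrFun (hφ (Pi.single g 1) (Pi.single g 1)) (t h)
  have hμ1 : ∀ g, μ g = 1 := fun g => by
    simpa [hf 1, hμ g] using hfun g g
  have ht1 : ∀ h, t h = t 1 * h := fun h =>
    inv_mul_eq_iff_eq_mul.mp (hinj (by simpa [hμ1] using (hfun 1 h).symm))
  refine ⟨t 1, (Pi.basisFun k G).ext' fun g => ?_⟩
  simp [ht, leftTranslation_single, ← ht1 g, hμ1]

noncomputable def mulEquivCayAut (hf : ∀ g, f g ≠ 0) (hinj : Function.Injective f)
    (hM : IsUnit (structMatrix f)) : G ≃* cayAut f :=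
  MulEquiv.ofBijective
    ((leftTranslation k).codRestrict (cayAut f) (leftTranslation_mem_cayAut f))
    ⟨fun _ _ hst => leftTranslation_injective (congrArg Subtype.val hst), fun ⟨_, hφ⟩ =>
      (eq_leftTranslation_of_mem_cayAut hf hinj hM hφ).imp fun _ hs => Subtype.ext hs.symm⟩

end Automorphisms

lemma structMatrix_update_one (f : G → k) (x : k) :
    structMatrix (Function.update f 1 x) =
      Matrix.scalar G x + structMatrix (Function.update f 1 0) := by
  ext h g
  rcases eq_or_ne h g with rfl | hhg
  · simp [structMatrix]
  · simp [structMatrix, Function.update_apply, inv_mul_eq_one, hhg.symm,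
      Matrix.diagonal_apply_ne _ hhg]

lemma exists_ne_zero_injective_isUnit_structMatrix
    (hk : 2 * (Fintype.card G : Cardinal) ≤ Cardinal.mk kˣ) :
    ∃ f : G → k, (∀ g, f g ≠ 0) ∧ Function.Injective f ∧ IsUnit (structMatrix f) := by
  classical
  obtain ⟨ι⟩ : Nonempty (G ↪ kˣ) := by
    have : (Fintype.card G : Cardinal) ≤ Cardinal.mk kˣ :=
      le_trans (by exact_mod_cast Nat.le_mul_of_pos_left _ two_pos) hk
    rwa [← Cardinal.lift_mk_le', Cardinal.mk_fintype, Cardinal.lift_natCast,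
      Cardinal.nat_le_lift_iff]
  set ι' : G → k := fun g => ι g
  -- `det (structMatrix (update ι' 1 x))` is a monic polynomial of degree `|G|` in `x`
  set p := (-structMatrix (Function.update ι' 1 0)).charpoly
  have hp : p ≠ 0 := (Matrix.charpoly_monic _).ne_zero
  set bad := p.roots.toFinset ∪ (Finset.univ.erase 1).image ι'
  have hbad : bad.card < 2 * Fintype.card G := by
    have hroots : p.roots.toFinset.card ≤ Fintype.card G :=
      (Multiset.toFinset_card_le _).trans ((p.card_roots').trans (by simp [p]))
    have himage : ((Finset.univ.erase 1).image ι').card < Fintype.card G :=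
      Finset.card_image_le.trans_lt (Finset.card_erase_lt_of_mem (Finset.mem_univ 1))
    exact (Finset.card_union_le _ _).trans_lt (by omega)
  obtain ⟨u, hu⟩ :=
    bad.exists_units_notMem_of_card_lt (lt_of_lt_of_le (by exact_mod_cast hbad) hk)
  simp only [bad, Finset.mem_union, Multiset.mem_toFinset, Polynomial.mem_roots hp,
    Polynomial.IsRoot, Finset.mem_image, Finset.mem_erase, Finset.mem_univ, and_true, not_or,
    not_exists, not_and] at hu
  obtain ⟨hu_root, hu_ne⟩ := hu
  refine ⟨Function.update ι' 1 u, fun g => ?_,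
    (Units.val_injective.comp ι.injective).update 1 hu_ne, ?_⟩
  · rcases eq_or_ne g 1 with rfl | hg <;> simp [*, ι']
  · rw [Matrix.isUnit_iff_isUnit_det, isUnit_iff_ne_zero, structMatrix_update_one,
      ← sub_neg_eq_add, ← Matrix.eval_charpoly]
    exact hu_root

universe w

/-- If `G` is a finite group and `k` a field with `|kˣ| ≥ 2|G|`, then there
is a function `f : G → k` such that for every field extension `F/k`, the Cayley evolution
`F`-algebra `Cay(f_F)` (where `f_F` is `f` composed with the inclusion `k → F`) is simple
and `Aut(Cay(f_F)) ≅ G`. -/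
theorem cayley_realization_absolute {G : Type*} [Group G] [Fintype G] [DecidableEq G]
    {k : Type*} [Field k]
    (hk : 2 * (Fintype.card G : Cardinal) ≤ Cardinal.mk kˣ) :
    ∃ f : G → k, ∀ (F : Type w) [Field F] [Algebra k F],
      CaySimple (fun g => algebraMap k F (f g)) ∧
      Nonempty (↥(cayAut (fun g => algebraMap k F (f g))) ≃* G) := by
  obtain ⟨f, hf, hinj, hM⟩ := exists_ne_zero_injective_isUnit_structMatrix hk
  refine ⟨f, fun F _ _ => ?_⟩
  have hfF : ∀ g, algebraMap k F (f g) ≠ 0 := fun g => (map_ne_zero _).mpr (hf g)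
  have hinjF : Function.Injective fun g => algebraMap k F (f g) :=
    (algebraMap k F).injective.comp hinj
  have hMF : IsUnit (structMatrix fun g => algebraMap k F (f g)) :=
    hM.map (algebraMap k F).mapMatrix
  exact ⟨caySimple_of_isUnit hfF hMF, ⟨(mulEquivCayAut hfF hinjF hMF).symm⟩⟩
end

section
/- Let G be a finite group, k a field, and f : G → k any function. The map sending g ∈ G to the k-linear extension of left translation h ↦ g h on k[G] is an injective group homomorphism from G into Aut(Cay(f)); in particular every left translation is an automorphism of the Cayley evolution algebra Cay(f), and G embeds as a subgroup of Aut(Cay(f)) acting on the natural basis G by permutations. -/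
open scoped BigOperators

variable {k : Type*} [Field k] {G : Type*} [Group G] [Fintype G] [DecidableEq G]

/-- Left translations give an injective group homomorphism
`G → Aut(Cay(f))`: the `k`-linear extension of `h ↦ x * h` (i.e. `v ↦ v (x⁻¹ * ·)`)
is an automorphism of `Cay(f)` for every `x ∈ G`, it permutes the natural basis, and
`G` thereby embeds into `Aut(Cay(f))`. -/
theorem left_translations_embed {G : Type*} [Group G] [Fintype G] [DecidableEq G]
    {k : Type*} [Field k] (f : G → k) :
    ∃ ρ : G →* cayAut f, Function.Injective ρ ∧
      (∀ (x : G) (v : G → k) (h : G),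
        ((ρ x : (G → k) ≃ₗ[k] (G → k)) v) h = v (x⁻¹ * h)) ∧
      (∀ x g : G,
        (ρ x : (G → k) ≃ₗ[k] (G → k)) (Pi.single g (1 : k)) = Pi.single (x * g) 1) := by
  -- the left translation as a linear equivalence
  let T : G → (G → k) ≃ₗ[k] (G → k) := fun x =>
    { toFun := fun v h => v (x⁻¹ * h)
      invFun := fun v h => v (x * h)
      map_add' := fun _ _ => rfl
      map_smul' := fun _ _ => rfl
      left_inv := fun v => by funext h; simp
      right_inv := fun v => by funext h; simp }
  have hT : ∀ (x : G) (v : G → k) (h : G), T x v = fun h => v (x⁻¹ * h) := fun _ _ _ => rfl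
  have hmem : ∀ x : G, T x ∈ cayAut f := by
    intro x a b
    funext h
    show (∑ g : G, a g * b g * f (g⁻¹ * (x⁻¹ * h)))
        = ∑ g : G, a (x⁻¹ * g) * b (x⁻¹ * g) * f (g⁻¹ * h)
    refine Fintype.sum_equiv (Equiv.mulLeft x) _ _ fun g => ?_
    simp [mul_inv_rev, mul_assoc]
  have hhom : ∀ x y : G, T (x * y) = T x * T y := by
    intro x y
    apply LinearEquiv.toLinearMap_injective
    apply LinearMap.ext
    intro v
    funext h
    show v ((x * y)⁻¹ * h) = v (y⁻¹ * (x⁻¹ * h))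
    rw [mul_inv_rev, mul_assoc]
  refine ⟨{ toFun := fun x => ⟨T x, hmem x⟩
            map_one' := ?_
            map_mul' := fun x y => by ext1; exact hhom x y }, ?_, ?_, ?_⟩
  · ext1
    apply LinearEquiv.toLinearMap_injective
    apply LinearMap.ext
    intro v
    funext h
    show v (1⁻¹ * h) = v h
    rw [inv_one, one_mul]
  · intro x y hxy
    have h0 : ((Pi.single (1:G) (1:k) : G → k)) (x⁻¹ * x) = ((Pi.single (1:G) (1:k) : G → k)) (y⁻¹ * x) := by
      have := congrFun (congrFun (congrArg (fun (φ : cayAut f) =>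
        ((φ : (G → k) ≃ₗ[k] (G → k)) : (G → k) → G → k)) hxy) (Pi.single (1 : G) (1 : k))) x
      exact this
    rw [inv_mul_cancel, Pi.single_eq_same] at h0
    by_contra hne
    rw [Pi.single_eq_of_ne (by simp [eq_comm]; exact fun h => hne (by
      have : y⁻¹ * x = 1 := h; exact (eq_of_inv_mul_eq_one this).symm))] at h0
    exact one_ne_zero h0
  · intro x v h; rfl
  · intro x g
    funext h
    show (Pi.single g (1 : k) : G → k) (x⁻¹ * h) = (Pi.single (x * g) (1 : k) : G → k) h
    rcases eq_or_ne h (x * g) with rfl | hne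
    · rw [inv_mul_cancel_left, Pi.single_eq_same, Pi.single_eq_same]
    · rw [Pi.single_eq_of_ne hne, Pi.single_eq_of_ne]
      intro h2
      exact hne (by rw [← h2]; simp)
end

section
/- Let G be a finite group, k a field, and f : G → k. Let ψ be an automorphism of the Cayley evolution algebra Cay(f) that maps the natural basis G bijectively onto itself, i.e., ψ restricts to a permutation σ of G. Then f(g⁻¹h) = f(σ(g)⁻¹σ(h)) for all g, h ∈ G; that is, σ is an automorphism of the edge-coloured (weighted) Cayley graph whose weight on the pair (g, h) is f(g⁻¹h). -/
open scoped BigOperators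

variable {k : Type*} [Field k] {G : Type*} [Group G] [Fintype G] [DecidableEq G]

/-- If an automorphism `ψ` of `Cay(f)` restricts to a permutation `σ` of
the natural basis `G`, then `f (g⁻¹ * h) = f ((σ g)⁻¹ * σ h)` for all `g, h ∈ G`, i.e. `σ`
preserves the weights of the coloured Cayley graph. -/
theorem basis_automorphism_preserves_weights {G : Type*} [Group G] [Fintype G] [DecidableEq G]
    {k : Type*} [Field k] (f : G → k)
    (ψ : (G → k) ≃ₗ[k] (G → k))
    (hψ : ∀ x y : G → k, ψ (cayMul f x y) = cayMul f (ψ x) (ψ y))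
    (σ : Equiv.Perm G)
    (hσ : ∀ g : G, ψ (Pi.single g (1 : k)) = Pi.single (σ g) 1) :
    ∀ g h : G, f (g⁻¹ * h) = f ((σ g)⁻¹ * σ h) := by
  -- square of a basis vector
  have hsq : ∀ g : G, cayMul f (Pi.single g (1 : k)) (Pi.single g 1)
      = fun h => f (g⁻¹ * h) := by
    intro g
    funext h
    show (∑ g' : G, (Pi.single g 1 : G → k) g' * (Pi.single g 1 : G → k) g' * f (g'⁻¹ * h)) = _
    rw [Finset.sum_eq_single g]
    · simp
    · intro b _ hb
      simp [Pi.single_eq_of_ne hb]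
    · simp
  intro g h
  have key : ψ (fun h' => f (g⁻¹ * h')) = fun h' => f ((σ g)⁻¹ * h') := by
    rw [← hsq g, hψ, hσ, hsq]
  -- expand ψ by linearity
  have expand : ψ (fun h' => f (g⁻¹ * h'))
      = ∑ h' : G, f (g⁻¹ * h') • (Pi.single (σ h') 1 : G → k) := by
    have : (fun h' => f (g⁻¹ * h')) = ∑ h' : G, f (g⁻¹ * h') • (Pi.single h' 1 : G → k) := by
      funext x
      simp [Finset.sum_apply, Pi.single_apply]
    rw [this, map_sum]
    simp_rw [map_smul, hσ]
  have := congrFun (expand ▸ key) (σ h)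
  rw [Finset.sum_apply] at this
  rw [Finset.sum_eq_single h] at this
  · simpa using this
  · intro b _ hb
    simp [Pi.single_apply, σ.injective.ne hb]
  · simp
end

section
/- Let k be a field whose multiplicative group k* has order at least 2n, and let n ≥ m ≥ 1 be integers. Let P ∈ k[X_1, …, X_m] be a homogeneous polynomial of degree n of the form P = Σ_{i=1}^m λ_i X_i^n + Q, where λ_i ≠ 0 for all i and every monomial appearing in Q involves at least two distinct variables. Then there exist pairwise distinct nonzero values k_1, …, k_m ∈ k* such that P(k_1, …, k_m) ≠ 0. -/
/-!
Multiply `P` by the Vandermonde product `V = ∏_{i<j} (X i - X j)`. In each variable `P` has degree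
at most `n` and `V` degree at most `m - 1 < n`, so `P * V` has degree `< 2n` in each variable and,
being nonzero, cannot vanish on all of `Sᵐ` for a set `S` of `2n` nonzero elements of `k`
(Combinatorial Nullstellensatz). A point where `P * V ≠ 0` has distinct coordinates. `P ≠ 0` since
its coefficient of `X₁ⁿ` is `λ₁`: no monomial of `Q` is a pure power.
-/

open MvPolynomial

namespace MvPolynomial

open Finset

variable {σ R : Type*}

section Vandermonde

variable [CommRing R]

theorem degreeOf_X_sub_X_le [Nontrivial R] [DecidableEq σ] (v i j : σ) :
    degreeOf v (X i - X j : MvPolynomial σ R) ≤ if i = v ∨ j = v then 1 else 0 := by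
  refine (degreeOf_sub_le v _ _).trans ?_
  simp only [degreeOf_X]
  split_ifs <;> grind

variable (σ R) [Fintype σ] [LinearOrder σ]

noncomputable def vandermonde : MvPolynomial σ R :=
  ∏ p ∈ ({p | p.1 < p.2} : Finset (σ × σ)), (X p.1 - X p.2)

variable {σ R}

theorem vandermonde_ne_zero [IsDomain R] : vandermonde σ R ≠ 0 :=
  prod_ne_zero_iff.mpr fun _ hp ↦ sub_ne_zero.mpr (X_injective.ne (mem_filter.mp hp).2.ne)

theorem injective_of_eval_vandermonde_ne_zero {x : σ → R} (hx : eval x (vandermonde σ R) ≠ 0) :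
    Function.Injective x := by
  have hlt : ∀ a b, a < b → x a ≠ x b := fun a b hab hxab ↦
    hx (by
      rw [vandermonde, map_prod]
      exact prod_eq_zero (i := (a, b)) (by simpa using hab) (by simp [hxab]))
  intro a b hab
  by_contra hne
  rcases lt_or_gt_of_ne hne with h | h
  exacts [hlt a b h hab, hlt b a h hab.symm]

theorem degreeOf_vandermonde_le [Nontrivial R] (v : σ) :
    degreeOf v (vandermonde σ R) ≤ Fintype.card σ - 1 := by
  classical
  set s : Finset (σ × σ) := {p | p.1 < p.2}
  have hpairs : {p ∈ s | p.1 = v ∨ p.2 = v} ⊆ (univ.erase v).image fun j ↦ (min j v, max j v) := by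
    intro p hp
    simp only [s, mem_filter, mem_univ, true_and] at hp
    simp only [mem_image, mem_erase, mem_univ, and_true]
    rcases hp with ⟨hlt, rfl | rfl⟩
    · exact ⟨p.2, hlt.ne', by simp [hlt.le]⟩
    · exact ⟨p.1, hlt.ne, by simp [hlt.le]⟩
  calc degreeOf v (vandermonde σ R)
      ≤ ∑ p ∈ s, degreeOf v (X p.1 - X p.2 : MvPolynomial σ R) := degreeOf_prod_le _ _ _
    _ ≤ ∑ p ∈ s, if p.1 = v ∨ p.2 = v then 1 else 0 :=
        sum_le_sum fun p _ ↦ degreeOf_X_sub_X_le v p.1 p.2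
    _ = #{p ∈ s | p.1 = v ∨ p.2 = v} := by rw [sum_boole, Nat.cast_id]
    _ ≤ #(univ.erase v) := (card_le_card hpairs).trans card_image_le
    _ = Fintype.card σ - 1 := card_erase_of_mem (mem_univ v)

end Vandermonde

theorem exists_injective_mem_eval_ne_zero [CommRing R] [IsDomain R] [Fintype σ]
    {F : MvPolynomial σ R} (hF : F ≠ 0) (S : Finset R)
    (hS : ∀ i, degreeOf i F + (Fintype.card σ - 1) < #S) :
    ∃ x : σ → R, Function.Injective x ∧ (∀ i, x i ∈ S) ∧ eval x F ≠ 0 := by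
  let _ : LinearOrder σ := LinearOrder.lift' _ (Fintype.equivFin σ).injective
  by_contra! hvanish
  refine mul_ne_zero hF (vandermonde_ne_zero (σ := σ)) <|
    eq_zero_of_eval_zero_at_prod_finset _ (fun _ ↦ S) (fun i ↦ ?_) fun x hx ↦ ?_
  · exact (degreeOf_mul_le i _ _).trans_lt
      ((Nat.add_le_add_left (degreeOf_vandermonde_le i) _).trans_lt (hS i))
  · by_contra hne
    rw [map_mul] at hne
    exact left_ne_zero_of_mul hne <|
      hvanish x (injective_of_eval_vandermonde_ne_zero (right_ne_zero_of_mul hne)) hx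

theorem coeff_single_sum_C_mul_X_pow_add [CommSemiring R] [Fintype σ] [DecidableEq σ]
    {n : ℕ} (hn : n ≠ 0) (lam : σ → R) {Q : MvPolynomial σ R}
    (hQ : ∀ d ∈ Q.support, 2 ≤ #d.support) (i : σ) :
    coeff (Finsupp.single i n) (∑ j, C (lam j) * X j ^ n + Q) = lam i := by
  have hQi : coeff (Finsupp.single i n) Q = 0 := by
    by_contra h
    have := hQ _ (mem_support_iff.mpr h)
    simp [Finsupp.support_single, hn] at this
  rw [coeff_add, hQi, add_zero, coeff_sum, sum_eq_single i]
  · simp [coeff_X_pow]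
  · intro j _ hji
    simp [coeff_X_pow, Finsupp.single_left_inj hn, hji]
  · simp

end MvPolynomial

/-- Let `k` be a field with `|kˣ| ≥ 2n` and `n ≥ m ≥ 1`. If
`P = ∑ i, λᵢ Xᵢⁿ + Q` is homogeneous of degree `n` in `m` variables, with all `λᵢ ≠ 0` and
every monomial of `Q` involving at least two distinct variables, then there are pairwise
distinct nonzero values `κ₁, …, κ_m ∈ kˣ` with `P(κ₁, …, κ_m) ≠ 0`. -/
theorem exists_nonvanishing_point {k : Type*} [Field k] {m n : ℕ}
    (hm : 1 ≤ m) (hmn : m ≤ n)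
    (hk : 2 * (n : Cardinal) ≤ Cardinal.mk kˣ)
    (P Q : MvPolynomial (Fin m) k) (lam : Fin m → k)
    (hhom : P.IsHomogeneous n)
    (hP : P = (∑ i : Fin m, C (lam i) * X i ^ n) + Q)
    (hlam : ∀ i, lam i ≠ 0)
    (hQ : ∀ d ∈ Q.support, 2 ≤ d.support.card) :
    ∃ κ : Fin m → k, Function.Injective κ ∧ (∀ i, κ i ≠ 0) ∧ eval κ P ≠ 0 := by
  have hP0 : P ≠ 0 := fun h0 ↦ hlam ⟨0, hm⟩ <| by
    rw [← coeff_single_sum_C_mul_X_pow_add (by omega : n ≠ 0) lam hQ, ← hP, h0, coeff_zero]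
  obtain ⟨T, hT⟩ := Cardinal.exists_finset_le_card kˣ (2 * n) (by exact_mod_cast hk)
  let S : Finset k := T.map ⟨Units.val, Units.val_injective⟩
  have hdeg (i : Fin m) : degreeOf i P + (Fintype.card (Fin m) - 1) < S.card := by
    have := (degreeOf_le_totalDegree P i).trans hhom.totalDegree_le
    rw [Finset.card_map, Fintype.card_fin]
    omega
  obtain ⟨κ, hinj, hκS, hκP⟩ := exists_injective_mem_eval_ne_zero hP0 S hdeg
  refine ⟨κ, hinj, fun i ↦ ?_, hκP⟩
  obtain ⟨u, -, hu⟩ := Finset.mem_map.mp (hκS i)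
  exact hu ▸ u.ne_zero
end

section
/- Let G be a finite group, k a field, and f : G → k a class function, i.e., f(g⁻¹ h g) = f(h) for all g, h ∈ G. Then for every h ∈ G, the k-linear extension of the map g ↦ h g h⁻¹ on k[G] is an automorphism of the Cayley evolution algebra Cay(f). -/
open scoped BigOperators

variable {k : Type*} [Field k] {G : Type*} [Group G] [Fintype G] [DecidableEq G]

/-- If `f : G → k` is a class function, then for every `h ∈ G` the
`k`-linear extension of `g ↦ h * g * h⁻¹` (i.e. the map `v ↦ v (h⁻¹ * · * h)`) is an
automorphism of the Cayley evolution algebra `Cay(f)`. -/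
theorem conjugation_is_automorphism {G : Type*} [Group G] [Fintype G] [DecidableEq G]
    {k : Type*} [Field k] (f : G → k)
    (hf : ∀ g h : G, f (g⁻¹ * h * g) = f h) (h : G) :
    ∃ ψ ∈ cayAut f, ∀ (v : G → k) (g : G),
      (ψ : (G → k) ≃ₗ[k] (G → k)) v g = v (h⁻¹ * g * h) := by
  refine ⟨{ toFun := fun v g => v (h⁻¹ * g * h)
            invFun := fun v g => v (h * g * h⁻¹)
            map_add' := fun _ _ => rfl
            map_smul' := fun _ _ => rfl
            left_inv := fun v => by funext g; simp [mul_assoc]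
            right_inv := fun v => by funext g; simp [mul_assoc] }, ?_, fun v g => rfl⟩
  intro x y
  funext g
  show (∑ a : G, x a * y a * f (a⁻¹ * (h⁻¹ * g * h)))
    = ∑ a : G, x (h⁻¹ * a * h) * y (h⁻¹ * a * h) * f (a⁻¹ * g)
  refine Fintype.sum_equiv ⟨fun a => h * a * h⁻¹, fun a => h⁻¹ * a * h,
    fun a => by group, fun a => by group⟩ _ _ fun a => ?_
  simp only [Equiv.coe_fn_mk]
  have h1 : h⁻¹ * (h * a * h⁻¹) * h = a := by group
  have h2 : (h * a * h⁻¹)⁻¹ * g = h * (a⁻¹ * (h⁻¹ * g * h)) * h⁻¹ := by group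
  rw [h1, h2, show h * (a⁻¹ * (h⁻¹ * g * h)) * h⁻¹ = h⁻¹⁻¹ * (a⁻¹ * (h⁻¹ * g * h)) * h⁻¹ by group, hf]
end

section
/- Let G be a finite group, k a field, and f : G → k a class function (f(g⁻¹ h g) = f(h) for all g, h ∈ G). Then Aut(Cay(f)) contains two subgroups K₁ and K₂ such that K₁ is isomorphic to G, K₂ is isomorphic to G/Z(G) (where Z(G) is the center of G), and K₁ ∩ K₂ = {1}. Concretely, K₁ is the group of left-translation automorphisms (linear extensions of g ↦ x g for x ∈ G), K₂ is the group of conjugation automorphisms (linear extensions of g ↦ h g h⁻¹ for h ∈ G), the homomorphism ρ : G → Aut(Cay(f)) sending h to conjugation by h has kernel exactly Z(G), and every nontrivial element of K₁ acts freely on the basis G while every element of K₂ fixes some basis element. -/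
open scoped BigOperators

variable {k : Type*} [Field k] {G : Type*} [Group G] [Fintype G] [DecidableEq G]

/-- Auxiliary: the linear equivalence of `G → k` induced by a permutation of `G`. -/
def permL (σ : Equiv.Perm G) : (G → k) ≃ₗ[k] (G → k) :=
  LinearEquiv.funCongrLeft k k σ

@[simp] lemma permL_apply (σ : Equiv.Perm G) (v : G → k) (g : G) :
    permL σ v g = v (σ g) := rfl

/-- Auxiliary: a permutation compatible with `f` gives an automorphism of `Cay(f)`. -/
lemma permL_mem (f : G → k) (σ : Equiv.Perm G)
    (hσ : ∀ x h : G, f (x⁻¹ * σ h) = f ((σ.symm x)⁻¹ * h)) :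
    (permL σ : (G → k) ≃ₗ[k] (G → k)) ∈ cayAut f := by
  intro v w
  funext h'
  show (cayMul f v w) (σ h') = _
  show (∑ g, v g * w g * f (g⁻¹ * σ h'))
      = ∑ g, (permL σ v) g * (permL σ w) g * f (g⁻¹ * h')
  simp only [permL_apply]
  rw [← Equiv.sum_comp σ.symm (fun g => v (σ g) * w (σ g) * f (g⁻¹ * h'))]
  refine Finset.sum_congr rfl fun g _ => ?_
  rw [Equiv.apply_symm_apply, hσ]

/-- If `f : G → k` is a class function, then `Aut(Cay(f))` contains the
subgroup `K₁` of left translations, isomorphic to `G`, and the subgroup `K₂` of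
conjugations, isomorphic to `G/Z(G)` (the conjugation homomorphism `ρ₂` has kernel exactly
the center), with `K₁ ⊓ K₂ = ⊥`; every nontrivial element of `K₁` acts freely on the basis
`G`, while every conjugation fixes some basis element. -/
theorem class_function_two_subgroups {G : Type*} [Group G] [Fintype G] [DecidableEq G]
    {k : Type*} [Field k] (f : G → k)
    (hf : ∀ g h : G, f (g⁻¹ * h * g) = f h) :
    ∃ (ρ₁ ρ₂ : G →* ↥(cayAut f)),
      (∀ (x : G) (v : G → k) (h : G),
        ((ρ₁ x : (G → k) ≃ₗ[k] (G → k)) v) h = v (x⁻¹ * h)) ∧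
      (∀ (x : G) (v : G → k) (g : G),
        ((ρ₂ x : (G → k) ≃ₗ[k] (G → k)) v) g = v (x⁻¹ * g * x)) ∧
      Function.Injective ρ₁ ∧
      ρ₂.ker = Subgroup.center G ∧
      Nonempty (↥ρ₁.range ≃* G) ∧
      Nonempty (↥ρ₂.range ≃* G ⧸ Subgroup.center G) ∧
      ρ₁.range ⊓ ρ₂.range = ⊥ ∧
      (∀ x : G, x ≠ 1 → ∀ g : G,
        (ρ₁ x : (G → k) ≃ₗ[k] (G → k)) (Pi.single g (1 : k)) ≠ Pi.single g 1) ∧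
      (∀ x : G, ∃ g : G,
        (ρ₂ x : (G → k) ≃ₗ[k] (G → k)) (Pi.single g (1 : k)) = Pi.single g 1) := by
  classical
  -- the underlying permutations
  have mem1 : ∀ x : G, (permL (Equiv.mulLeft x⁻¹) : (G → k) ≃ₗ[k] (G → k)) ∈ cayAut f := by
    intro x
    refine permL_mem f _ fun a h => ?_
    simp [Equiv.mulLeft, mul_assoc]
  have mem2 : ∀ x : G, (permL ((MulAut.conj x⁻¹).toEquiv) : (G → k) ≃ₗ[k] (G → k)) ∈ cayAut f := by
    intro x
    refine permL_mem f _ fun a h => ?_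
    have h1 : (a⁻¹ * (x⁻¹ * h * x⁻¹⁻¹)) = x⁻¹ * (((x * a * x⁻¹)⁻¹) * h) * x := by group
    have h2 : ((MulAut.conj x⁻¹).toEquiv.symm a) = x * a * x⁻¹ := by
      simp [MulAut.conj]
    show f (a⁻¹ * (x⁻¹ * h * x⁻¹⁻¹)) = _
    rw [h1, hf, h2]
  set ρ₁ : G →* ↥(cayAut f) := MonoidHom.mk'
      (fun x => ⟨permL (Equiv.mulLeft x⁻¹), mem1 x⟩)
      (by
        intro a b
        ext v h
        show v ((a * b)⁻¹ * h) = v (b⁻¹ * (a⁻¹ * h))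
        rw [mul_inv_rev, mul_assoc]) with hρ₁def
  set ρ₂ : G →* ↥(cayAut f) := MonoidHom.mk'
      (fun x => ⟨permL ((MulAut.conj x⁻¹).toEquiv), mem2 x⟩)
      (by
        intro a b
        ext v h
        show v ((a * b)⁻¹ * h * (a * b)⁻¹⁻¹) = v (b⁻¹ * (a⁻¹ * h * a⁻¹⁻¹) * b⁻¹⁻¹)
        congr 1; group) with hρ₂def
  have A1 : ∀ (x : G) (v : G → k) (h : G),
      ((ρ₁ x : (G → k) ≃ₗ[k] (G → k)) v) h = v (x⁻¹ * h) := fun _ _ _ => rfl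
  have A2 : ∀ (x : G) (v : G → k) (g : G),
      ((ρ₂ x : (G → k) ≃ₗ[k] (G → k)) v) g = v (x⁻¹ * g * x) := by
    intro x v g
    show v (x⁻¹ * g * x⁻¹⁻¹) = v (x⁻¹ * g * x)
    rw [inv_inv]
  -- injectivity of ρ₁
  have hinj : Function.Injective ρ₁ := by
    refine (injective_iff_map_eq_one ρ₁).mpr fun x hx => ?_
    have key : ∀ (v : G → k) (h : G), v (x⁻¹ * h) = v h := by
      intro v h
      have := A1 x v h
      rw [hx] at this
      exact this.symm
    have := key (Pi.single (1 : G) (1 : k)) x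
    rw [inv_mul_cancel] at this
    simp only [Pi.single_apply, if_pos rfl] at this
    by_contra hne
    rw [if_neg hne] at this
    exact one_ne_zero this
  -- kernel of ρ₂
  have hker : ρ₂.ker = Subgroup.center G := by
    ext x
    rw [MonoidHom.mem_ker, Subgroup.mem_center_iff]
    constructor
    · intro hx g
      have key : ∀ (v : G → k) (g : G), v (x⁻¹ * g * x) = v g := by
        intro v g
        have := A2 x v g
        rw [hx] at this
        exact this.symm
      have := key (Pi.single (x⁻¹ * g * x) (1 : k)) g
      simp only [Pi.single_apply, if_pos rfl] at this
      have hgx : x⁻¹ * g * x = g := by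
        by_contra hne
        rw [if_neg (Ne.symm hne)] at this
        exact one_ne_zero this
      have : g * x = x * (x⁻¹ * g * x) := by group
      rw [hgx] at this
      exact this
    · intro hx
      ext v g
      show v (x⁻¹ * g * x⁻¹⁻¹) = v g
      rw [inv_inv]
      congr 1
      have : g * x = x * g := hx g
      calc x⁻¹ * g * x = x⁻¹ * (g * x) := by rw [mul_assoc]
        _ = x⁻¹ * (x * g) := by rw [this]
        _ = g := by group
  refine ⟨ρ₁, ρ₂, A1, A2, hinj, hker, ⟨(MonoidHom.ofInjective hinj).symm⟩,
    ⟨(QuotientGroup.quotientKerEquivRange ρ₂).symm.trans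
      (QuotientGroup.quotientMulEquivOfEq hker)⟩, ?_, ?_, ?_⟩
  · -- trivial intersection
    rw [eq_bot_iff]
    rintro φ hφ
    rw [Subgroup.mem_inf] at hφ
    obtain ⟨⟨x, hx⟩, ⟨y, hy⟩⟩ := hφ
    have key : ∀ (v : G → k) (h : G), v (x⁻¹ * h) = v (y⁻¹ * h * y) := by
      intro v h
      rw [← A1 x v h, ← A2 y v h, hx, hy]
    have hyy : y⁻¹ * y * y = y := by group
    have h3 := key (Pi.single y (1 : k)) y
    rw [hyy] at h3
    simp only [Pi.single_apply, if_pos rfl] at h3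
    have hx1 : x = 1 := by
      by_contra hne
      have hcond : ¬ (x⁻¹ * y = y) := by
        intro h
        have hx' : x⁻¹ = 1 := mul_right_cancel (b := y) (c := (1 : G)) (by simpa using h)
        exact hne (inv_eq_one.mp hx')
      rw [if_neg hcond] at h3
      exact zero_ne_one h3
    rw [hx1, map_one] at hx
    rw [Subgroup.mem_bot, ← hx]
  · -- freeness of ρ₁
    intro x hx g heq
    have h1 := congrFun heq (x * g)
    rw [A1] at h1
    rw [inv_mul_cancel_left] at h1
    simp only [Pi.single_apply, if_pos rfl] at h1
    have hcond : ¬ (x * g = g) := by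
      intro h
      exact hx (mul_right_cancel (b := g) (c := (1 : G)) (by simpa using h))
    rw [if_neg hcond] at h1
    exact one_ne_zero h1
  · -- ρ₂ fixes a basis vector
    intro x
    refine ⟨1, ?_⟩
    funext h
    rw [A2]
    have hiff : (x⁻¹ * h * x = 1) ↔ (h = 1) := by
      have : x⁻¹ * h * x = x⁻¹ * h * (x⁻¹)⁻¹ := by rw [inv_inv]
      rw [this, conj_eq_one_iff]
    simp only [Pi.single_apply, hiff]
end

section
/- Let G be a finite group, k a field, and f : G → k a class function (f(g⁻¹ h g) = f(h) for all g, h ∈ G). If the automorphism group Aut(Cay(f)) of the Cayley evolution algebra Cay(f) is isomorphic to G, then G is abelian. -/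
/-! Left translations `x ↦ x (g⁻¹ * ·)` are automorphisms of `Cay(f)` for every `f`, and right
translations `x ↦ x (· * g)` are automorphisms when `f` is a class function. Both give injective
maps `G → Aut(Cay(f))`, so if `Aut(Cay(f))` has the size of `G`, both are onto. Left and right
translations commute, hence `Aut(Cay(f))`, and with it `G`, is abelian. -/

open scoped BigOperators

variable {k : Type*} [Field k] {G : Type*} [Group G] [Fintype G] [DecidableEq G]

theorem LinearEquiv.funCongrLeft_injective (R M : Type*) [Semiring R] [AddCommMonoid M]
    [Module R M] [Nontrivial M] {m n : Type*} :
    Function.Injective (LinearEquiv.funCongrLeft R M : (m ≃ n) → (n → M) ≃ₗ[R] (m → M)) := by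
  classical
  intro e₁ e₂ h
  obtain ⟨v, hv⟩ := exists_ne (0 : M)
  ext z
  by_contra hne
  have := congr($h (Pi.single (e₁ z) v) z)
  simp [Ne.symm hne, hv] at this

section Translation

variable (R : Type*) [Semiring R] {H : Type*} [Group H]

def leftTranslate (g : H) : (H → R) ≃ₗ[R] (H → R) :=
  LinearEquiv.funCongrLeft R R (Equiv.mulLeft g⁻¹)

def rightTranslate (g : H) : (H → R) ≃ₗ[R] (H → R) :=
  LinearEquiv.funCongrLeft R R (Equiv.mulRight g)

@[simp]
theorem leftTranslate_apply (g : H) (x : H → R) (z : H) : leftTranslate R g x z = x (g⁻¹ * z) :=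
  rfl

@[simp]
theorem rightTranslate_apply (g : H) (x : H → R) (z : H) : rightTranslate R g x z = x (z * g) :=
  rfl

theorem leftTranslate_injective [Nontrivial R] : Function.Injective (leftTranslate R (H := H)) := by
  intro g₁ g₂ h
  have := congr($(LinearEquiv.funCongrLeft_injective R R h) 1)
  simpa using this

theorem rightTranslate_injective [Nontrivial R] :
    Function.Injective (rightTranslate R (H := H)) := by
  intro g₁ g₂ h
  have := congr($(LinearEquiv.funCongrLeft_injective R R h) 1)
  simpa using this

theorem commute_leftTranslate_rightTranslate (g h : H) :
    Commute (leftTranslate R g) (rightTranslate R h) := by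
  ext x z
  simp [mul_assoc]

end Translation

section CayleyEvolution

variable {K : Type*} [Field K] {H : Type*} [Group H] [Fintype H] (f : H → K)

theorem leftTranslate_mem_cayAut (g : H) : leftTranslate K g ∈ cayAut f := by
  intro x y
  funext h
  exact Fintype.sum_equiv (Equiv.mulLeft g) _ _ fun a => by simp [mul_assoc]

theorem rightTranslate_mem_cayAut (hf : ∀ g h : H, f (g⁻¹ * h * g) = f h) (g : H) :
    rightTranslate K g ∈ cayAut f := by
  intro x y
  funext h
  refine Fintype.sum_equiv (Equiv.mulRight g⁻¹) _ _ fun a => ?_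
  have hconj : a⁻¹ * (h * g) = g⁻¹ * (g * a⁻¹ * h) * g := by group
  simp [hconj, hf]

end CayleyEvolution

theorem mul_comm_of_surjective_of_commute {M X Y : Type*} [Mul M] {L : X → M} {R : Y → M}
    (hL : Function.Surjective L) (hR : Function.Surjective R) (hLR : ∀ x y, Commute (L x) (R y))
    (a b : M) : a * b = b * a := by
  obtain ⟨x, rfl⟩ := hL a
  obtain ⟨y, rfl⟩ := hR b
  exact hLR x y

theorem class_function_realization_implies_abelian_general {G : Type*} [Group G] [Fintype G]
    {k : Type*} [Field k] (f : G → k)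
    (hf : ∀ g h : G, f (g⁻¹ * h * g) = f h)
    (hiso : Nonempty (↥(cayAut f) ≃* G)) :
    ∀ a b : G, a * b = b * a := by
  obtain ⟨e⟩ := hiso
  let L : G → cayAut f := fun g => ⟨leftTranslate k g, leftTranslate_mem_cayAut f g⟩
  let R : G → cayAut f := fun g => ⟨rightTranslate k g, rightTranslate_mem_cayAut f hf g⟩
  have hL : Function.Surjective L := Function.Injective.surjective_of_finite e.symm.toEquiv
    fun _ _ h => leftTranslate_injective k congr(Subtype.val $h)
  have hR : Function.Surjective R := Function.Injective.surjective_of_finite e.symm.toEquiv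
    fun _ _ h => rightTranslate_injective k congr(Subtype.val $h)
  have hcomm := mul_comm_of_surjective_of_commute hL hR fun g h =>
    Subtype.ext (commute_leftTranslate_rightTranslate k g h)
  intro a b
  simpa using congr(e $(hcomm (e.symm a) (e.symm b)))

/-- If `f : G → k` is a class function and `Aut(Cay(f)) ≅ G`, then `G`
is abelian. -/
theorem class_function_realization_implies_abelian {G : Type*} [Group G] [Fintype G]
    [DecidableEq G] {k : Type*} [Field k] (f : G → k)
    (hf : ∀ g h : G, f (g⁻¹ * h * g) = f h)
    (hiso : Nonempty (↥(cayAut f) ≃* G)) :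
    ∀ a b : G, a * b = b * a :=
  class_function_realization_implies_abelian_general f hf hiso
end

section
/- Let G be a finite group, k a field, and f : G → k a function such that the structure matrix of Cay(f) (the G × G matrix with (h, g) entry f(g⁻¹h)) is invertible and the support supp(f) = {g ∈ G : f(g) ≠ 0} generates G as a group. Then the Cayley evolution algebra Cay(f) is simple: the product · is not identically zero and the only ideals of Cay(f) are 0 and k[G]. -/
open scoped BigOperators

variable {k : Type*} [Field k] {G : Type*} [Group G] [Fintype G] [DecidableEq G]

-- aux: in a finite group, submonoid closure of a generating set is top
theorem mclosure_eq_top {G : Type*} [Group G] [Finite G] {S : Set G}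
    (hgen : Subgroup.closure S = ⊤) : Submonoid.closure S = ⊤ := by
  have hinv : ∀ x ∈ Submonoid.closure S, x⁻¹ ∈ Submonoid.closure S := by
    intro x hx
    have h1 : x * x ^ (orderOf x - 1) = 1 := by
      rw [← pow_succ', Nat.sub_add_cancel (Nat.one_le_iff_ne_zero.2 (orderOf_pos x).ne'),
        pow_orderOf_eq_one]
    rw [inv_eq_of_mul_eq_one_right h1]
    exact pow_mem hx _
  let H : Subgroup G :=
    { (Submonoid.closure S) with inv_mem' := fun hx => hinv _ hx }
  have : Subgroup.closure S ≤ H := Subgroup.closure_le H |>.2 Submonoid.subset_closure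
  rw [hgen, top_le_iff] at this
  rw [eq_top_iff]
  intro x _
  have hx : x ∈ H := this ▸ Subgroup.mem_top x
  exact hx

/-- If the structure matrix of `Cay(f)` is invertible and the support of
`f` generates `G` as a group, then `Cay(f)` is simple: the product is not identically zero
and its only ideals are `0` and `k[G]`. -/
theorem regular_group_cayley_is_simple {G : Type*} [Group G] [Fintype G] [DecidableEq G]
    {k : Type*} [Field k] (f : G → k)
    (hreg : IsUnit (structMatrix f))
    (hgen : Subgroup.closure {g : G | f g ≠ 0} = ⊤) :
    (∃ x y : G → k, cayMul f x y ≠ 0) ∧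
    ∀ I : Submodule k (G → k), (∀ x y : G → k, y ∈ I → cayMul f x y ∈ I) → I = ⊥ ∨ I = ⊤ := by
  -- f is not identically zero
  have hf : ∃ s, f s ≠ 0 := by
    by_contra h
    push_neg at h
    have : structMatrix f = 0 := by
      ext i j; simp [structMatrix, h]
    rw [this] at hreg
    exact not_isUnit_zero hreg
  obtain ⟨s, hs⟩ := hf
  -- notation: column of the structure matrix
  set col : G → (G → k) := fun g h => f (g⁻¹ * h) with hcol_def
  -- basic computation: cayMul with a delta function
  have hdelta : ∀ (y : G → k) (g : G), cayMul f (Pi.single g 1) y = y g • col g := by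
    intro y g
    funext h
    simp only [cayMul, Pi.smul_apply, smul_eq_mul, hcol_def]
    rw [Finset.sum_eq_single g]
    · simp
    · intro b _ hb; simp [Pi.single_apply, hb]
    · simp
  constructor
  · refine ⟨Pi.single 1 1, Pi.single 1 1, fun h => ?_⟩
    have := congrFun h s
    rw [hdelta] at this
    simp [hcol_def, Pi.single_apply, hs] at this
  intro I hI
  rcases eq_or_ne I ⊥ with h | h
  · exact Or.inl h
  right
  -- there is a nonzero element of I
  obtain ⟨y, hyI, hy0⟩ := Submodule.exists_mem_ne_zero_of_ne_bot (by simpa using h)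
  obtain ⟨g₀, hg₀⟩ : ∃ g, y g ≠ 0 := by
    by_contra hc; push_neg at hc; exact hy0 (funext hc)
  -- step 0: from y ∈ I with y g ≠ 0, get col g ∈ I
  have key : ∀ (y : G → k), y ∈ I → ∀ g, y g ≠ 0 → col g ∈ I := by
    intro y hyI g hyg
    have h1 : cayMul f (Pi.single g 1) y ∈ I := hI _ _ hyI
    rw [hdelta] at h1
    have h2 := Submodule.smul_mem I (y g)⁻¹ h1
    rwa [smul_smul, inv_mul_cancel₀ hyg, one_smul] at h2
  have base : col g₀ ∈ I := key y hyI g₀ hg₀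
  -- step: closure under right multiplication by support elements
  have step : ∀ g, col g ∈ I → ∀ s, f s ≠ 0 → col (g * s) ∈ I := by
    intro g hg s hfs
    have : col g (g * s) ≠ 0 := by
      simpa [hcol_def] using hfs
    have := key (col g) hg (g * s) this
    exact this
  -- all columns are in I, by monoid closure induction
  have hmtop : Submonoid.closure {g : G | f g ≠ 0} = ⊤ := mclosure_eq_top hgen
  have allcols : ∀ g : G, col g ∈ I := by
    have main : ∀ m ∈ Submonoid.closure {g : G | f g ≠ 0},
        ∀ g, col g ∈ I → col (g * m) ∈ I := by
      intro m hm
      induction hm using Submonoid.closure_induction with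
      | mem s hs => exact fun g hg => step g hg s hs
      | one => intro g hg; simpa using hg
      | mul a b _ _ pa pb =>
          intro g hg
          rw [← mul_assoc]
          exact pb _ (pa _ hg)
    intro g
    have := main (g₀⁻¹ * g) (hmtop ▸ Submonoid.mem_top _) g₀ base
    simpa using this
  -- columns span everything since the matrix is invertible
  have hdet : IsUnit (structMatrix f).det := (Matrix.isUnit_iff_isUnit_det _).mp hreg
  have hAB : structMatrix f * (structMatrix f)⁻¹ = 1 := Matrix.mul_nonsing_inv _ hdet
  set B := (structMatrix f)⁻¹ with hB
  have hbasis : ∀ i : G, (fun j => if i = j then (1 : k) else 0) ∈ I := by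
    intro i
    have hsum : (∑ g : G, B g i • col g) ∈ I :=
      Submodule.sum_mem I fun g _ => Submodule.smul_mem I _ (allcols g)
    have heq : (∑ g : G, B g i • col g) = fun j => if i = j then (1 : k) else 0 := by
      funext j
      have := congrFun (congrFun hAB j) i
      simp only [Matrix.mul_apply, Matrix.one_apply, structMatrix, Matrix.of_apply] at this
      simp only [Finset.sum_apply, Pi.smul_apply, smul_eq_mul, hcol_def]
      rw [show (if i = j then (1:k) else 0) = if j = i then 1 else 0 by simp [eq_comm], ← this]
      exact Finset.sum_congr rfl fun g _ => mul_comm _ _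
    rw [heq] at hsum
    exact hsum
  rw [eq_top_iff]
  intro x _
  have : x = ∑ i : G, x i • fun j => if i = j then (1 : k) else 0 := pi_eq_sum_univ x
  rw [this]
  exact Submodule.sum_mem I fun i _ => Submodule.smul_mem I _ (hbasis i)
end
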